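/- Let R be an associative unital ℂ-algebra with a derivation D (write r' := D r), let x ∈ R be central with x' = 1, and let f, g, a ∈ R with a' = 0, g invertible, and suppose f' = −f² + g − (1/2)x and g' = 2fg + a (the system P₂¹). Define the 2×2 matrices over R[λ]: A(λ) = [[2, 2ag⁻¹],[0,0]]λ² + [[2ag⁻¹, −2f²+g−x−2ag⁻¹f−2fag⁻¹],[−2, −2ag⁻¹]]λ + [[−2f²+g−2fag⁻¹, 2f³−fg+xf−1+2fag⁻¹f],[−2f−2ag⁻¹, 2f²−g+x+2ag⁻¹f]] and B(λ) = [[1, ag⁻¹],[0,0]]λ + [[f+ag⁻¹, −f²+(1/2)g−(1/2)x−ag⁻¹f],[−1, 2f]]. Then the zero-curvature equation ∂ₓA − ∂_λB + AB − BA = 0 holds identically in λ. (The non-polynomial Jimbo–Miwa pair JM'₂¹ is an isomonodromic Lax pair for P₂¹.) -/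
import Mathlib


/- STATEMENT 8: the non-polynomial Jimbo–Miwa pair JM'₂¹ is an isomonodromic Lax pair
for the non-abelian system P₂¹: if f' = −f² + g − (1/2)x and g' = 2fg + a, then the
zero-curvature equation ∂ₓA − ∂_λB + AB − BA = 0 holds identically in λ. -/

noncomputable section

variable (R : Type*) [Ring R] [Algebra ℂ R]

/-- The λ-dependent matrix `A(λ)` of the non-polynomial Jimbo–Miwa pair JM'₂¹,
with `ginv` a two-sided inverse of `g`. -/
def JM21'A (f g a ginv x : R) (lam : ℂ) : Matrix (Fin 2) (Fin 2) R :=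
  (lam ^ 2) • !![(2 : R), 2 * (a * ginv); 0, 0]
    + lam • !![2 * (a * ginv),
               -2 * f ^ 2 + g - x - 2 * (a * ginv) * f - 2 * (f * (a * ginv));
               -2, -2 * (a * ginv)]
    + !![-2 * f ^ 2 + g - 2 * (f * (a * ginv)),
         2 * f ^ 3 - f * g + x * f - 1 + 2 * (f * (a * ginv) * f);
         -2 * f - 2 * (a * ginv), 2 * f ^ 2 - g + x + 2 * (a * ginv) * f]

/-- The λ-dependent matrix `B(λ)` of the non-polynomial Jimbo–Miwa pair JM'₂¹. -/
def JM21'B (f g a ginv x : R) (lam : ℂ) : Matrix (Fin 2) (Fin 2) R :=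
  lam • !![(1 : R), a * ginv; 0, 0]
    + !![f + a * ginv, -f ^ 2 + (1 / 2 : ℂ) • g - (1 / 2 : ℂ) • x - (a * ginv) * f;
         -1, 2 * f]

theorem JM21'_zero_curvature_of_P21
    (D : R →ₗ[ℂ] R) (hD : ∀ a b : R, D (a * b) = D a * b + a * D b)
    (x : R) (hx : ∀ r : R, x * r = r * x) (hx1 : D x = 1)
    (f g a ginv : R) (ha : D a = 0)
    (hg1 : g * ginv = 1) (hg2 : ginv * g = 1)
    (hf' : D f = -f ^ 2 + g - (1 / 2 : ℂ) • x)
    (hg' : D g = 2 * f * g + a) :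
    ∀ lam : ℂ,
      (JM21'A R f g a ginv x lam).map ⇑D - !![(1 : R), a * ginv; 0, 0]
        + JM21'A R f g a ginv x lam * JM21'B R f g a ginv x lam
        - JM21'B R f g a ginv x lam * JM21'A R f g a ginv x lam = 0 := by
  have h1 : D 1 = 0 := by have := hD 1 1; simpa using this
  have hD2 : D (2:R) = 0 := by
    have h : (2:R) = 1 + 1 := by norm_num
    rw [h, map_add, h1, add_zero]
  have hDginv : D ginv = -(ginv * (D g * ginv)) := by
    have h0 : D g * ginv + g * D ginv = 0 := by rw [← hD, hg1, h1]
    have h2 : g * D ginv = -(D g * ginv) := eq_neg_of_add_eq_zero_left (by rw [add_comm]; exact h0)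
    calc D ginv = (ginv * g) * D ginv := by rw [hg2, one_mul]
    _ = ginv * (g * D ginv) := by rw [mul_assoc]
    _ = -(ginv * (D g * ginv)) := by rw [h2, mul_neg]
  have hDu' : D (a * ginv) = -(2*((a*ginv)*f)) - (a*ginv)*(a*ginv) := by
    rw [hD, ha, zero_mul, zero_add, hDginv, hg']
    have h3 : (2*f*g + a) * ginv = 2*f + a*ginv := by
      rw [add_mul, mul_assoc, hg1, mul_one]
    rw [h3]
    noncomm_ring
  have hag : (a * ginv) * g = a := by rw [mul_assoc, hg2, mul_one]
  have c2 : ∀ r : R, (2:R) * r = (2:ℂ) • r := by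
    intro r
    rw [show ((2:ℂ)) = ((2:ℕ):ℂ) by norm_num, Nat.cast_smul_eq_nsmul, nsmul_eq_mul, Nat.cast_ofNat]
  have c2' : ∀ r : R, r * (2:R) = (2:ℂ) • r := by
    intro r
    rw [mul_two, ← two_mul, c2]
  have c2'' : (2:R) = (2:ℂ) • (1:R) := by rw [← mul_one (2:R), c2]
  intro lam
  simp only [JM21'A, JM21'B]
  obtain ⟨u, hu, hDu, hug⟩ : ∃ u : R, a * ginv = u ∧
      D u = -(2*(u*f)) - u*u ∧ u * g = a := ⟨a*ginv, rfl, hDu', hag⟩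
  rw [hu]
  have hg''u : D g = 2*f*g + u*g := by rw [hg', ← hug]
  have hf2 : D f = -(f*f) + g - (1/2:ℂ) • x := by rw [hf', pow_two]
  ext i j
  fin_cases i <;> fin_cases j <;>
  · simp only [Fin.zero_eta, Fin.mk_one, Matrix.of_apply, Matrix.map_apply, Matrix.sub_apply, Matrix.add_apply, Matrix.smul_apply,
      Matrix.mul_apply, Fin.sum_univ_two, Matrix.cons_val', Matrix.cons_val_zero,
      Matrix.cons_val_one, Matrix.head_cons, Matrix.head_fin_const, Matrix.empty_val',
      Matrix.cons_val_fin_one, Matrix.zero_apply]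
    simp only [pow_succ, pow_one, pow_zero, one_mul]
    simp only [map_add, map_sub, map_neg, map_zero, map_smul, hD, h1, hD2, hf2, hg''u, hDu, hx1, ha]
    simp only [c2, c2', c2'', mul_add, add_mul, mul_sub, sub_mul, neg_mul, mul_neg, mul_assoc,
      smul_mul_assoc, mul_smul_comm, hx, one_mul, mul_one, mul_zero, zero_mul,
      add_zero, zero_add]
    module
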